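/- Consider a star metric with k servers on k distinct leaves at distance 1 from the center. The adversary sends the first request to the center, and in each round t = 2, …, k sends a request to the location of the server matched by the deterministic online algorithm in round t−1. Then the algorithm's total cost is at least 2k − 1 while the offline optimum is 1; hence no deterministic algorithm with prediction queries separated by at least k rounds can be better than (2k−1)-competitive even with perfect predictions. -/
import Mathlib


/-- Points of the star metric with `k` leaves: `none` is the center, `some i`
is the `i`-th leaf; leaf–center distance 1, leaf–leaf distance 2. -/
noncomputable def starDist {k : ℕ} (x y : Option (Fin k)) : ℝ :=
  if x = y then 0 else if x = none ∨ y = none then 1 else 2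

/-- The adversarial request history against the deterministic algorithm `A`:
`hist A t` is the list of the requests of rounds `0, …, t`.  The first request
is at the center, and each subsequent request is at the location of the server
matched by `A` in the previous round. -/
def hist {k : ℕ} (A : List (Option (Fin k)) → Fin k) : ℕ → List (Option (Fin k))
  | 0 => [none]
  | t + 1 => hist A t ++ [some (A (hist A t))]

/-- The adversarial request of round `t`. -/
def advReq {k : ℕ} (A : List (Option (Fin k)) → Fin k) (t : ℕ) : Option (Fin k) :=
  if t = 0 then none else some (A (hist A (t - 1)))

/-- Against the adversary that sends the first request to the center and each
subsequent request to the server matched in the previous round, any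
deterministic online algorithm `A` (which never reuses a server) incurs total
cost at least `2k − 1` on the star with `k` leaf servers, while the offline
optimum is `1`; hence no deterministic algorithm with prediction queries
separated by at least `k` rounds beats ratio `2k − 1` even with perfect
predictions. -/
theorem stmt15 (k : ℕ) (hk : 1 ≤ k)
    (A : List (Option (Fin k)) → Fin k)
    (hinj : Function.Injective fun t : Fin k => A (hist A t.val)) :
    (2 * (k : ℝ) - 1) ≤ ∑ t : Fin k, starDist (advReq A t.val) (some (A (hist A t.val))) ∧
    ∃ π : Fin k ≃ Fin k, ∑ t : Fin k, starDist (advReq A t.val) (some (π t)) = 1 := by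
  obtain ⟨m, rfl⟩ : ∃ m, k = m + 1 := ⟨k - 1, by omega⟩
  haveI : NeZero (m + 1) := ⟨by omega⟩
  have hbij : Function.Bijective (fun t : Fin (m+1) => A (hist A t.val)) :=
    Finite.injective_iff_bijective.mp hinj
  set fe := Equiv.ofBijective _ hbij with hfe
  refine ⟨?_, ⟨(Equiv.subRight (1 : Fin (m+1))).trans fe, ?_⟩⟩
  · rw [Fin.sum_univ_succ]
    have h0 : starDist (advReq A (0 : Fin (m+1)).val) (some (A (hist A (0 : Fin (m+1)).val))) = 1 := by
      simp [advReq, starDist]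
    rw [h0]
    have h2 : ∀ i : Fin m, starDist (advReq A (i.succ).val) (some (A (hist A (i.succ).val))) = 2 := by
      intro i
      have hne : A (hist A i.val) ≠ A (hist A (i.val + 1)) := by
        intro h
        have := hinj (a₁ := ⟨i.val, by omega⟩) (a₂ := ⟨i.val + 1, by omega⟩) h
        simp [Fin.ext_iff] at this
      simp [advReq, starDist, Fin.val_succ, hne]
    rw [Finset.sum_congr rfl (fun i _ => h2 i)]
    push_cast
    simp
    ring_nf
    norm_num
  · rw [Fin.sum_univ_succ]
    have h0 : starDist (advReq A (0 : Fin (m+1)).val)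
        (some (((Equiv.subRight (1 : Fin (m+1))).trans fe) 0)) = 1 := by
      simp [advReq, starDist]
    rw [h0]
    have h2 : ∀ i : Fin m, starDist (advReq A (i.succ).val)
        (some (((Equiv.subRight (1 : Fin (m+1))).trans fe) i.succ)) = 0 := by
      intro i
      have hsub : (i.succ - 1 : Fin (m+1)).val = i.val := by
        have him := i.isLt
        simp only [Fin.sub_def, Fin.val_succ]
        rw [show ((1:Fin (m+1)):ℕ) = 1 % (m+1) from rfl, Nat.mod_eq_of_lt (show (1:ℕ) < m+1 by omega),
          show m + 1 - 1 + (i.val + 1) = i.val + (m+1) by omega, Nat.add_mod_right,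
          Nat.mod_eq_of_lt (by omega)]
      simp only [Equiv.trans_apply, Equiv.subRight_apply, hfe, Equiv.ofBijective_apply]
      simp [advReq, starDist, Fin.val_succ, hsub]
    rw [Finset.sum_congr rfl (fun i _ => h2 i)]
    simp
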